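/- Let x₁, …, x_n and y be nonnegative integers, and let λ be the sum of the bit-sizes of x₁, …, x_n and y. If Σ_{i=1}^{n} √x_i ≠ y, then |Σ_{i=1}^{n} √x_i − y| > 2^(−2^n·(λ+1)). -/

import Mathlib

open Polynomial

lemma sqrtsep_rep {R S : Type*} [CommRing R] [CommRing S] (φ : R →+* S) (m : R) (g : R[X]) :
    ∃ a b : R[X], ∀ (A ρ : S), ρ ^ 2 = φ m →
      g.eval₂ φ (A + ρ) = a.eval₂ φ A + b.eval₂ φ A * ρ := by
  induction g using Polynomial.induction_on with
  | C c => exact ⟨C c, 0, fun A ρ _ => by simp⟩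
  | add p q hp hq =>
      obtain ⟨a1, b1, h1⟩ := hp
      obtain ⟨a2, b2, h2⟩ := hq
      refine ⟨a1 + a2, b1 + b2, fun A ρ hρ => ?_⟩
      rw [eval₂_add, h1 A ρ hρ, h2 A ρ hρ, eval₂_add, eval₂_add]
      ring
  | monomial k c hk =>
      obtain ⟨a, b, h⟩ := hk
      refine ⟨a * X + C m * b, a + b * X, fun A ρ hρ => ?_⟩
      have e : (C c * X ^ (k+1) : R[X]) = (C c * X ^ k) * X := by ring
      rw [e, eval₂_mul, h A ρ hρ, eval₂_X, eval₂_add, eval₂_add, eval₂_mul, eval₂_mul,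
        eval₂_mul, eval₂_X, eval₂_C]
      linear_combination (b.eval₂ φ A) * hρ

lemma sqrtsep_pair {R S : Type*} [CommRing R] [CommRing S] (φ : R →+* S) (m : R) (g : R[X]) :
    ∃ h : R[X], ∀ (A ρ : S), ρ ^ 2 = φ m →
      g.eval₂ φ (A + ρ) * g.eval₂ φ (A - ρ) = h.eval₂ φ A := by
  obtain ⟨a, b, hab⟩ := sqrtsep_rep φ m g
  refine ⟨a * a - C m * (b * b), fun A ρ hρ => ?_⟩
  have h1 := hab A ρ hρ
  have h2 := hab A (-ρ) (by rw [neg_pow, hρ]; ring_nf)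
  rw [sub_eq_add_neg, h1, h2, eval₂_sub, eval₂_mul, eval₂_mul, eval₂_mul, eval₂_C]
  linear_combination (-(b.eval₂ φ A * b.eval₂ φ A)) * hρ

lemma sqrtsep_prod {R S : Type*} [CommRing R] [CommRing S] (φ : R →+* S) :
    ∀ (n : ℕ) (r : Fin n → S), (∀ i, ∃ m : R, r i ^ 2 = φ m) → ∀ g : R[X],
      ∃ k : R, ∏ s : Fin n → Bool, g.eval₂ φ (∑ i, if s i then r i else -r i) = φ k := by
  intro n
  induction n with
  | zero =>
      intro r _ g
      exact ⟨g.coeff 0, by simp [eval₂_at_zero]⟩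
  | succ n ih =>
      intro r hr g
      obtain ⟨m0, hm0⟩ := hr 0
      obtain ⟨h, hh⟩ := sqrtsep_pair φ m0 g
      obtain ⟨k, hk⟩ := ih (fun i => r i.succ) (fun i => hr i.succ) h
      refine ⟨k, ?_⟩
      rw [← hk]
      have e1 : ∏ s : Fin (n+1) → Bool, g.eval₂ φ (∑ i, if s i then r i else -r i)
          = ∏ p : Bool × (Fin n → Bool),
              g.eval₂ φ (∑ i, if (Fin.cons p.1 p.2 : Fin (n+1) → Bool) i then r i else -r i) := by
        refine Fintype.prod_equiv (Fin.consEquiv (fun _ => Bool)).symm _ _ (fun s => ?_)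
        have hs : (Fin.cons ((Fin.consEquiv (fun _ => Bool)).symm s).1
            ((Fin.consEquiv (fun _ => Bool)).symm s).2 : Fin (n+1) → Bool) = s :=
          (Fin.consEquiv (fun _ => Bool)).apply_symm_apply s
        rw [hs]
      rw [e1, Fintype.prod_prod_type, Fintype.prod_bool, ← Finset.prod_mul_distrib]
      apply Finset.prod_congr rfl
      intro s _
      have hsum : ∀ b : Bool, (∑ i, if (Fin.cons b s : Fin (n+1) → Bool) i then r i else -r i)
          = (if b then r 0 else -r 0) + ∑ i : Fin n, if s i then r i.succ else -(r i.succ) := by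
        intro b
        rw [Fin.sum_univ_succ]
        simp [Fin.cons_zero, Fin.cons_succ]
      rw [hsum true, hsum false]
      set A := ∑ i : Fin n, if s i = true then r i.succ else -r i.succ with hA
      rw [show (if (true : Bool) = true then r 0 else -r 0) + A = A + r 0 by simp [add_comm],
        show (if (false : Bool) = true then r 0 else -r 0) + A = A - r 0 by simp; ring]
      exact hh A (r 0) hm0

lemma sqrtsep_nat_aux (A B : ℕ) (hA : 1 ≤ A) (hB : 1 ≤ B) : A + B ≤ A * B + 1 := by
  obtain ⟨a, rfl⟩ := Nat.exists_eq_add_of_le hA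
  obtain ⟨b, rfl⟩ := Nat.exists_eq_add_of_le hB
  nlinarith

lemma sqrtsep_size_sum {ι : Type*} (s : Finset ι) (f : ι → ℕ) :
    (∑ i ∈ s, f i) + 1 ≤ 2 ^ (∑ i ∈ s, Nat.size (f i)) := by
  classical
  induction s using Finset.induction_on with
  | empty => simp
  | insert _ _ hnot ih =>
      rename_i a s
      rw [Finset.sum_insert hnot, Finset.sum_insert hnot, pow_add]
      have h1 : f a + 1 ≤ 2 ^ Nat.size (f a) := Nat.lt_size_self (f a)
      have h2 : 2 ^ Nat.size (f a) + 2 ^ (∑ i ∈ s, Nat.size (f i))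
          ≤ 2 ^ Nat.size (f a) * 2 ^ (∑ i ∈ s, Nat.size (f i)) + 1 :=
        sqrtsep_nat_aux _ _ (Nat.one_le_two_pow) (Nat.one_le_two_pow)
      omega

/-- Let `x₁, …, x_n` and `y` be nonnegative integers, and let `λ` be the sum of
the bit-sizes of `x₁, …, x_n` and `y`. If `Σ √x_i ≠ y`, then
`|Σ √x_i − y| > 2^(−2^n·(λ+1))`. -/
theorem sqrt_sum_separation (n : ℕ) (x : Fin n → ℕ) (y : ℕ) (lam : ℕ)
    (hlam : lam = (∑ i, Nat.size (x i)) + Nat.size y)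
    (hne : (∑ i, Real.sqrt (x i)) ≠ (y : ℝ)) :
    (2 : ℝ) ^ (-(2 ^ n * ((lam : ℤ) + 1))) <
      |(∑ i, Real.sqrt (x i)) - (y : ℝ)| := by
  classical
  set sq : Fin n → ℝ := fun i => Real.sqrt (x i) with hsq
  set σ : (Fin n → Bool) → ℝ := fun s => ∑ i, if s i then sq i else -(sq i) with hσ
  set β : (Fin n → Bool) → ℝ := fun s => σ s - y with hβdef
  set φ : Polynomial ℤ →+* Polynomial ℝ := Polynomial.mapRingHom (Int.castRingHom ℝ) with hφ
  -- integrality of the product polynomial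
  obtain ⟨k, hk⟩ := sqrtsep_prod φ n (fun i => Polynomial.C (sq i))
    (fun i => ⟨Polynomial.C ((x i : ℤ)), by
      rw [← Polynomial.C_pow]
      simp only [hsq, Real.sq_sqrt (Nat.cast_nonneg (x i))]
      simp [hφ]⟩)
    (Polynomial.C Polynomial.X - Polynomial.X + Polynomial.C (Polynomial.C (y : ℤ)))
  have hF : ∏ s : Fin n → Bool, ((Polynomial.X : Polynomial ℝ) - Polynomial.C (β s))
      = φ k := by
    rw [← hk]
    apply Finset.prod_congr rfl
    intro s _
    have hsumC : (∑ i, if s i then (Polynomial.C (sq i) : Polynomial ℝ)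
        else -Polynomial.C (sq i)) = Polynomial.C (σ s) := by
      rw [hσ, map_sum]
      apply Finset.sum_congr rfl
      intro i _
      by_cases h : s i <;> simp [h]
    rw [hsumC]
    simp only [Polynomial.eval₂_add, Polynomial.eval₂_sub, Polynomial.eval₂_C,
      Polynomial.eval₂_X, hφ, Polynomial.coe_mapRingHom, Polynomial.map_X, Polynomial.map_C]
    rw [hβdef]
    simp only [map_sub, Polynomial.map_C]
    rw [show ((Int.castRingHom ℝ) ((y : ℤ))) = (y : ℝ) by simp]
    ring
  simp only [hφ, Polynomial.coe_mapRingHom] at hF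
  set u : Finset (Fin n → Bool) := Finset.univ.filter (fun s => β s ≠ 0) with hu
  set m : ℕ := (Finset.univ \ u).card with hm
  have hsplit : ∏ s : Fin n → Bool, ((Polynomial.X : Polynomial ℝ) - Polynomial.C (β s))
      = Polynomial.X ^ m * ∏ s ∈ u, (Polynomial.X - Polynomial.C (β s)) := by
    rw [← Finset.prod_sdiff (Finset.filter_subset (fun s => β s ≠ 0) Finset.univ)]
    congr 1
    have hz : ∀ s ∈ Finset.univ \ u,
        (Polynomial.X : Polynomial ℝ) - Polynomial.C (β s) = Polynomial.X := by
      intro s hs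
      rw [Finset.mem_sdiff, hu, Finset.mem_filter] at hs
      have : β s = 0 := by
        by_contra hb
        exact hs.2 ⟨Finset.mem_univ _, hb⟩
      simp [this]
    rw [Finset.prod_congr rfl hz, Finset.prod_const, hm]
  have hc0 : (∏ s ∈ u, ((Polynomial.X : Polynomial ℝ) - Polynomial.C (β s))).coeff 0
      = ∏ s ∈ u, (-(β s)) := by
    rw [Polynomial.coeff_zero_eq_eval_zero, Polynomial.eval_prod]
    simp
  have hcm : ((k.coeff m : ℤ) : ℝ) = ∏ s ∈ u, (-(β s)) := by
    have h2 : (Polynomial.X ^ m * ∏ s ∈ u, ((Polynomial.X : Polynomial ℝ)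
        - Polynomial.C (β s))).coeff m = ((k.coeff m : ℤ) : ℝ) := by
      rw [← hsplit, hF, Polynomial.coeff_map]
      simp
    have h3 := Polynomial.coeff_X_pow_mul
      (∏ s ∈ u, ((Polynomial.X : Polynomial ℝ) - Polynomial.C (β s))) m 0
    rw [zero_add] at h3
    rw [← h2, h3, hc0]
  have hune : ∀ s ∈ u, β s ≠ 0 := fun s hs => (Finset.mem_filter.mp hs).2
  have hprodne : (∏ s ∈ u, (-(β s))) ≠ 0 :=
    Finset.prod_ne_zero_iff.mpr (fun s hs => neg_ne_zero.mpr (hune s hs))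
  have hkne : k.coeff m ≠ 0 := by
    intro h0
    apply hprodne
    rw [← hcm, h0, Int.cast_zero]
  have h1le : (1 : ℝ) ≤ |∏ s ∈ u, (-(β s))| := by
    rw [← hcm, ← Int.cast_abs]
    exact_mod_cast Int.one_le_abs hkne
  have habs : |∏ s ∈ u, (-(β s))| = ∏ s ∈ u, |β s| := by
    rw [Finset.abs_prod]
    exact Finset.prod_congr rfl (fun s _ => abs_neg _)
  set s0 : Fin n → Bool := fun _ => true with hs0
  have hβ0 : β s0 = (∑ i, Real.sqrt (x i)) - y := by
    simp [hβdef, hσ, hs0, hsq]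
  have hs0ne : β s0 ≠ 0 := by
    rw [hβ0]
    exact sub_ne_zero.mpr hne
  have hs0u : s0 ∈ u := Finset.mem_filter.mpr ⟨Finset.mem_univ _, hs0ne⟩
  have hnat : (∑ i, x i) + y ≤ 2 ^ lam := by
    have hx1 : (∑ i, x i) + 1 ≤ 2 ^ (∑ i, Nat.size (x i)) := sqrtsep_size_sum _ _
    have hy1 : y + 1 ≤ 2 ^ Nat.size y := Nat.lt_size_self y
    have haux : 2 ^ (∑ i, Nat.size (x i)) + 2 ^ Nat.size y
        ≤ 2 ^ (∑ i, Nat.size (x i)) * 2 ^ Nat.size y + 1 :=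
      sqrtsep_nat_aux _ _ Nat.one_le_two_pow Nat.one_le_two_pow
    rw [hlam, pow_add]
    omega
  have hB : ∀ s, |β s| ≤ (2 : ℝ) ^ lam := by
    intro s
    have h1 : |σ s| ≤ ∑ i, sq i := by
      rw [hσ]
      refine le_trans (Finset.abs_sum_le_sum_abs _ _) ?_
      apply Finset.sum_le_sum
      intro i _
      by_cases h : s i <;> simp [h, abs_of_nonneg (Real.sqrt_nonneg _), hsq, le_refl]
    have h2 : ∀ i, sq i ≤ (x i : ℝ) := by
      intro i
      rw [hsq]
      rcases Nat.eq_zero_or_pos (x i) with h | h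
      · simp [h]
      · have h1x : (1 : ℝ) ≤ (x i : ℝ) := by exact_mod_cast h
        have hsqx := Real.sq_sqrt (le_trans zero_le_one h1x)
        nlinarith [Real.sqrt_nonneg ((x i : ℝ))]
    have h3 : |β s| ≤ |σ s| + y := by
      rw [hβdef]
      calc |σ s - (y : ℝ)| = |σ s + -(y : ℝ)| := by rw [sub_eq_add_neg]
        _ ≤ |σ s| + |(-(y : ℝ))| := abs_add_le _ _
        _ = |σ s| + y := by rw [abs_neg, Nat.abs_cast]
    have h4 : (∑ i, sq i) ≤ ((∑ i, x i : ℕ) : ℝ) := by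
      push_cast
      exact Finset.sum_le_sum (fun i _ => h2 i)
    have h5 : ((∑ i, x i : ℕ) : ℝ) + y ≤ (2 : ℝ) ^ lam := by exact_mod_cast hnat
    calc |β s| ≤ |σ s| + y := h3
      _ ≤ ((∑ i, x i : ℕ) : ℝ) + y := by linarith
      _ ≤ (2 : ℝ) ^ lam := h5
  have hcard : (u.erase s0).card ≤ 2 ^ n - 1 := by
    have h1 : (u.erase s0).card = u.card - 1 := Finset.card_erase_of_mem hs0u
    have h2 : u.card ≤ 2 ^ n := by
      have h3 := Finset.card_le_univ u
      have h4 : Fintype.card (Fin n → Bool) = 2 ^ n := by simp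
      omega
    omega
  have hone_le : (1 : ℝ) ≤ (2 : ℝ) ^ lam := one_le_pow₀ (by norm_num)
  have hprod_le : ∏ s ∈ u.erase s0, |β s| ≤ ((2 : ℝ) ^ lam) ^ (2 ^ n - 1) := by
    have h7 := Finset.prod_le_prod (s := u.erase s0) (f := fun s => |β s|)
      (g := fun _ => (2 : ℝ) ^ lam) (fun s _ => abs_nonneg _) (fun s _ => hB s)
    rw [Finset.prod_const] at h7
    calc ∏ s ∈ u.erase s0, |β s| ≤ ((2 : ℝ) ^ lam) ^ (u.erase s0).card := h7
      _ ≤ ((2 : ℝ) ^ lam) ^ (2 ^ n - 1) := pow_le_pow_right₀ hone_le hcard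
  have hmain : (1 : ℝ) ≤ |β s0| * ((2 : ℝ) ^ lam) ^ (2 ^ n - 1) := by
    have h6 := h1le
    rw [habs, ← Finset.mul_prod_erase u _ hs0u] at h6
    calc (1 : ℝ) ≤ |β s0| * ∏ s ∈ u.erase s0, |β s| := h6
      _ ≤ |β s0| * ((2 : ℝ) ^ lam) ^ (2 ^ n - 1) :=
          mul_le_mul_of_nonneg_left hprod_le (abs_nonneg _)
  set N : ℕ := lam * (2 ^ n - 1) with hN
  have hpowN : ((2 : ℝ) ^ lam) ^ (2 ^ n - 1) = (2 : ℝ) ^ N := by rw [hN, pow_mul]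
  have hposN : (0 : ℝ) < 2 ^ N := by positivity
  have hlow : (2 : ℝ) ^ (-(N : ℤ)) ≤ |β s0| := by
    rw [zpow_neg, zpow_natCast, inv_le_iff_one_le_mul₀ hposN]
    rw [hpowN] at hmain
    linarith
  rw [← hβ0]
  refine lt_of_lt_of_le ?_ hlow
  apply zpow_lt_zpow_right₀ (by norm_num : (1 : ℝ) < 2)
  have hNcast : (N : ℤ) = (lam : ℤ) * ((2 : ℤ) ^ n - 1) := by
    rw [hN]
    push_cast [Nat.cast_sub Nat.one_le_two_pow]
    ring
  rw [hNcast]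
  have h2n : (1 : ℤ) ≤ 2 ^ n := one_le_pow₀ (by norm_num)
  have hlam0 : (0 : ℤ) ≤ (lam : ℤ) := Int.natCast_nonneg lam
  nlinarith
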